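/- Assume V(x) = ½‖∇ψ(x)‖² is convex, ψ is bounded from below, and let T > 0. Define J(T; w) = ∫₀^T (½‖w′(t)‖² + ½‖∇ψ(w(t))‖²) dt + ψ(w(T)) for C¹ functions w : [0, T] → H. Then a C¹ function u : [0, T] → H satisfies u′(t) = −∇ψ(u(t)) for all t ∈ [0, T] if and only if J(T; u) ≤ J(T; w) for every C¹ function w : [0, T] → H with w(0) = u(0). -/

import Mathlib

open Filter MeasureTheory Set InnerProductSpace Topology
open scoped Interval

/-!
Completing the square, `½‖w'‖² + ½‖∇ψ(w)‖² = ½‖w' + ∇ψ(w)‖² - (ψ ∘ w)'`, so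
`J(T; w) = ψ(w 0) + ∫₀ᵀ ½‖w' + ∇ψ(w)‖²`: among curves with the same initial point, the
solutions of `u' = -∇ψ(u)` are minimisers, since they make the integral vanish.

Conversely, a minimiser `u` has vanishing first variation,
`∫₀ᵀ ⟪u', φ'⟫ + ⟪∇V(u), φ⟫ + ⟪∇ψ(u T), φ T⟫ = 0` whenever `φ 0 = 0`, where `∇V = ∇²ψ ∇ψ`.
Integrating the middle term by parts and arguing as in the du Bois-Reymond lemma gives
`u' = G - G T - ∇ψ(u T)` for the primitive `G` of `∇V(u)`. Hence `P = u' + ∇ψ(u)` solves the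
linear equation `P' = ∇²ψ(u) P` with the natural boundary condition `P T = 0`, and `P = 0` by
uniqueness for this backward Cauchy problem.
-/

theorem eqOn_zero_of_integral_eq_zero_of_nonneg {f : ℝ → ℝ} {a b : ℝ} (hab : a < b)
    (hf : ContinuousOn f (Icc a b)) (hf₀ : ∀ t ∈ Icc a b, 0 ≤ f t)
    (hint : ∫ t in a..b, f t = 0) : EqOn f 0 (Icc a b) := by
  intro t ht
  by_contra hne
  exact (intervalIntegral.integral_pos hab hf (fun s hs => hf₀ s (Ioc_subset_Icc_self hs))
    ⟨t, ht, (hf₀ t ht).lt_of_ne' hne⟩).ne' hint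

section Curves

variable {E : Type*} [NormedAddCommGroup E] [NormedSpace ℝ E]

def HasContinuousDerivOn (w w' : ℝ → E) (s : Set ℝ) : Prop :=
  (∀ t ∈ s, HasDerivWithinAt w (w' t) s t) ∧ ContinuousOn w' s

namespace HasContinuousDerivOn

variable {w w' φ φ' : ℝ → E} {s : Set ℝ}

lemma continuousOn (hw : HasContinuousDerivOn w w' s) : ContinuousOn w s :=
  fun t ht => (hw.1 t ht).continuousWithinAt

lemma add (hw : HasContinuousDerivOn w w' s) (hφ : HasContinuousDerivOn φ φ' s) :
    HasContinuousDerivOn (fun t => w t + φ t) (fun t => w' t + φ' t) s :=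
  ⟨fun t ht => (hw.1 t ht).add (hφ.1 t ht), hw.2.add hφ.2⟩

lemma const_smul (hw : HasContinuousDerivOn w w' s) (c : ℝ) :
    HasContinuousDerivOn (fun t => c • w t) (fun t => c • w' t) s :=
  ⟨fun t ht => (hw.1 t ht).const_smul c, hw.2.const_smul c⟩

theorem integral_eq_sub [CompleteSpace E] {a b : ℝ} (hab : a ≤ b)
    (hw : HasContinuousDerivOn w w' (Icc a b)) : ∫ t in a..b, w' t = w b - w a :=
  intervalIntegral.integral_eq_sub_of_hasDeriv_right_of_le hab hw.continuousOn
    (fun t ht => ((hw.1 t (Ioo_subset_Icc_self ht)).hasDerivAt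
      (Icc_mem_nhds ht.1 ht.2)).hasDerivWithinAt)
    (hw.2.intervalIntegrable_of_Icc hab)

end HasContinuousDerivOn

variable {a b : ℝ}

theorem hasContinuousDerivOn_primitive [CompleteSpace E] {f : ℝ → E}
    (hf : ContinuousOn f (Icc a b)) :
    HasContinuousDerivOn (fun t => ∫ s in a..t, f s) f (Icc a b) := by
  refine ⟨fun t ht => ?_, hf⟩
  have : Fact (t ∈ Icc a b) := ⟨ht⟩
  exact intervalIntegral.integral_hasDerivWithinAt_right
    ((hf.mono (Icc_subset_Icc_right ht.2)).intervalIntegrable_of_Icc ht.1)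
    (hf.stronglyMeasurableAtFilter_nhdsWithin measurableSet_Icc t) (hf t ht)

theorem hasDerivAt_integral_of_continuousOn_prod {F F' : ℝ → ℝ → E} {x₀ : ℝ} {K : Set ℝ}
    (hK : K ∈ 𝓝 x₀) (hKc : IsCompact K) (hF : ∀ x ∈ K, ContinuousOn (F x) [[a, b]])
    (hF' : ContinuousOn (fun p : ℝ × ℝ => F' p.1 p.2) (K ×ˢ [[a, b]]))
    (hdiff : ∀ t ∈ [[a, b]], ∀ x ∈ K, HasDerivAt (fun x => F x t) (F' x t) x) :
    HasDerivAt (fun x => ∫ t in a..b, F x t) (∫ t in a..b, F' x₀ t) x₀ := by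
  obtain ⟨C, hC⟩ := (hKc.prod isCompact_uIcc).exists_bound_of_continuousOn hF'
  have hx₀ : x₀ ∈ K := mem_of_mem_nhds hK
  have hF'x₀ : ContinuousOn (F' x₀) [[a, b]] :=
    hF'.comp (continuousOn_const.prodMk continuousOn_id) fun t ht => ⟨hx₀, ht⟩
  refine (intervalIntegral.hasDerivAt_integral_of_dominated_loc_of_deriv_le
    (bound := fun _ => C) hK ?_ (hF x₀ hx₀).intervalIntegrable
    ((hF'x₀.mono uIoc_subset_uIcc).aestronglyMeasurable measurableSet_uIoc) ?_
    intervalIntegrable_const ?_).2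
  · filter_upwards [hK] with x hx
    exact ((hF x hx).mono uIoc_subset_uIcc).aestronglyMeasurable measurableSet_uIoc
  · exact ae_of_all _ fun t ht x hx => hC (x, t) ⟨hx, uIoc_subset_uIcc ht⟩
  · exact ae_of_all _ fun t ht x hx => hdiff t (uIoc_subset_uIcc ht) x hx

theorem eqOn_zero_of_hasDerivWithinAt_clm_apply {A : ℝ → E →L[ℝ] E} {P : ℝ → E}
    (hA : ContinuousOn A (Icc a b))
    (hP : ∀ t ∈ Icc a b, HasDerivWithinAt P (A t (P t)) (Icc a b) t) (hPb : P b = 0) :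
    EqOn P 0 (Icc a b) := by
  obtain ⟨C, hC⟩ := isCompact_Icc.exists_bound_of_continuousOn hA
  have hlip : ∀ t ∈ Ioc a b, LipschitzOnWith C.toNNReal (A t) univ := fun t ht =>
    ((A t).lipschitz.weaken (by
      rw [← NNReal.coe_le_coe, coe_nnnorm, Real.coe_toNNReal']
      exact (hC t (Ioc_subset_Icc_self ht)).trans (le_max_left _ _))).lipschitzOnWith
  have hderiv : ∀ t ∈ Ioc a b, HasDerivWithinAt P (A t (P t)) (Iic t) t := fun t ht =>
    (hP t (Ioc_subset_Icc_self ht)).mono_of_mem_nhdsWithin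
      (mem_nhdsWithin.2 ⟨Ioi a, isOpen_Ioi, ht.1, fun s hs => ⟨hs.1.le, hs.2.trans ht.2⟩⟩)
  exact ODE_solution_unique_of_mem_Icc_left (v := fun t => A t) (s := fun _ => univ)
    (g := fun _ => 0) hlip (fun t ht => (hP t ht).continuousWithinAt) hderiv
    (fun _ _ => mem_univ _) continuousOn_const
    (fun t _ => by simpa using hasDerivWithinAt_const t (Iic t) (0 : E))
    (fun _ _ => mem_univ _) hPb

end Curves

section Hilbert

variable {H : Type*} [NormedAddCommGroup H] [InnerProductSpace ℝ H]

theorem HasContinuousDerivOn.inner {w w' φ φ' : ℝ → H} {s : Set ℝ}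
    (hw : HasContinuousDerivOn w w' s) (hφ : HasContinuousDerivOn φ φ' s) :
    HasContinuousDerivOn (fun t => ⟪w t, φ t⟫_ℝ) (fun t => ⟪w' t, φ t⟫_ℝ + ⟪w t, φ' t⟫_ℝ) s :=
  ⟨fun t ht => ((hw.1 t ht).inner ℝ (hφ.1 t ht)).congr_deriv (add_comm _ _),
    (hw.2.inner hφ.continuousOn).add (hw.continuousOn.inner hφ.2)⟩

variable [CompleteSpace H] {ψ : H → ℝ}

theorem ContDiff.gradient {n m : WithTop ℕ∞} (hψ : ContDiff ℝ n ψ) (hmn : m + 1 ≤ n) :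
    ContDiff ℝ m (gradient ψ) :=
  (toDual ℝ H).symm.toContinuousLinearEquiv.contDiff.comp (hψ.fderiv_right hmn)

theorem inner_fderiv_gradient_apply (x a b : H) :
    ⟪fderiv ℝ (gradient ψ) x a, b⟫_ℝ = fderiv ℝ (fderiv ℝ ψ) x a b := by
  have : gradient ψ = (toDual ℝ H).symm ∘ fderiv ℝ ψ := rfl
  rw [this, LinearIsometryEquiv.comp_fderiv]
  exact toDual_symm_apply

theorem inner_fderiv_gradient_comm (hψ : ContDiff ℝ 2 ψ) (x a b : H) :
    ⟪fderiv ℝ (gradient ψ) x a, b⟫_ℝ = ⟪a, fderiv ℝ (gradient ψ) x b⟫_ℝ := by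
  rw [← real_inner_comm a, inner_fderiv_gradient_apply, inner_fderiv_gradient_apply,
    (hψ.contDiffAt.isSymmSndFDerivAt (by simp)).eq]

theorem HasGradientAt.comp_hasDerivAt {f : H → ℝ} {g : H} {γ : ℝ → H} {γ' : H} {x : ℝ}
    (hf : HasGradientAt f g (γ x)) (hγ : HasDerivAt γ γ' x) :
    HasDerivAt (fun x => f (γ x)) ⟪g, γ'⟫_ℝ x := by
  simpa [Function.comp_def] using hf.hasFDerivAt.comp_hasDerivAt x hγ

/-- The gradient of the paper's `V = ½‖∇ψ‖²`, see `hasGradientAt_gradV`. -/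
noncomputable def gradV (ψ : H → ℝ) (x : H) : H := fderiv ℝ (gradient ψ) x (gradient ψ x)

theorem continuous_gradV (hψ : ContDiff ℝ 2 ψ) : Continuous (gradV ψ) :=
  have hg : ContDiff ℝ 1 (gradient ψ) := hψ.gradient le_rfl
  (hg.continuous_fderiv one_ne_zero).clm_apply hg.continuous

theorem hasGradientAt_gradV (hψ : ContDiff ℝ 2 ψ) (x : H) :
    HasGradientAt (fun y => (1/2 : ℝ) * ‖gradient ψ y‖ ^ 2) (gradV ψ x) x := by
  have hg : HasFDerivAt (gradient ψ) (fderiv ℝ (gradient ψ) x) x :=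
    ((hψ.gradient (m := 1) le_rfl).differentiable one_ne_zero x).hasFDerivAt
  rw [hasGradientAt_iff_hasFDerivAt]
  refine (hg.norm_sq.const_mul (1/2 : ℝ)).congr_fderiv ?_
  ext v
  simp [gradV, inner_fderiv_gradient_comm hψ]

namespace HasContinuousDerivOn

variable {w w' φ φ' : ℝ → H} {s : Set ℝ}

theorem comp_contDiff (hψ : ContDiff ℝ 1 ψ) (hw : HasContinuousDerivOn w w' s) :
    HasContinuousDerivOn (fun t => ψ (w t)) (fun t => ⟪gradient ψ (w t), w' t⟫_ℝ) s := by
  refine ⟨fun t ht => ?_,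
    ((hψ.gradient (m := 0) le_rfl).continuous.comp_continuousOn hw.continuousOn).inner hw.2⟩
  have hψ' := ((hψ.differentiable one_ne_zero) (w t)).hasGradientAt
  simpa [Function.comp_def] using hψ'.hasFDerivAt.comp_hasDerivWithinAt t (hw.1 t ht)

end HasContinuousDerivOn

theorem eqOn_neg_of_integral_inner_add_inner_eq_zero {f : ℝ → H} {c : H} {a b : ℝ} (hab : a < b)
    (hf : ContinuousOn f (Icc a b))
    (h : ∀ φ φ', HasContinuousDerivOn φ φ' (Icc a b) → φ a = 0 →
      (∫ t in a..b, ⟪f t, φ' t⟫_ℝ) + ⟪c, φ b⟫_ℝ = 0) :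
    EqOn f (fun _ => -c) (Icc a b) := by
  -- Testing with `φ = ∫ₐᵗ (f + c)` turns the hypothesis into `∫ₐᵇ ‖f + c‖² = 0`.
  have hfc : ContinuousOn (fun t => f t + c) (Icc a b) := hf.add continuousOn_const
  have hfc_int := hfc.intervalIntegrable_of_Icc (μ := volume) hab.le
  have htest := h _ _ (hasContinuousDerivOn_primitive hfc) intervalIntegral.integral_same
  have hc : ⟪c, ∫ t in a..b, f t + c⟫_ℝ = ∫ t in a..b, ⟪c, f t + c⟫_ℝ :=
    ((innerSL ℝ c).intervalIntegral_comp_comm hfc_int).symm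
  have hsq : ∫ t in a..b, ‖f t + c‖ ^ 2 = 0 := by
    rw [← htest, hc, ← intervalIntegral.integral_add]
    · simp_rw [← inner_add_left, real_inner_self_eq_norm_sq]
    · exact (hf.inner hfc).intervalIntegrable_of_Icc hab.le
    · exact (continuousOn_const.inner hfc).intervalIntegrable_of_Icc hab.le
  intro t ht
  have := eqOn_zero_of_integral_eq_zero_of_nonneg hab (hfc.norm.pow 2) (fun _ _ => sq_nonneg _)
    hsq ht
  simpa [eq_neg_iff_add_eq_zero] using this

end Hilbert

section Action

variable {H : Type*} [NormedAddCommGroup H] [InnerProductSpace ℝ H] [CompleteSpace H]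
  {ψ : H → ℝ} {T : ℝ} {u u' w w' φ φ' : ℝ → H}

/-- The paper's `J(T; w)`, for a curve `w` with derivative `w'`. -/
noncomputable def action (ψ : H → ℝ) (T : ℝ) (w w' : ℝ → H) : ℝ :=
  (∫ t in (0:ℝ)..T, ((1/2 : ℝ) * ‖w' t‖ ^ 2 + (1/2 : ℝ) * ‖gradient ψ (w t)‖ ^ 2)) + ψ (w T)

theorem action_eq_integral_norm_sq_add (hψ : ContDiff ℝ 1 ψ) (hT : 0 ≤ T)
    (hw : HasContinuousDerivOn w w' (Icc 0 T)) :
    action ψ T w w' =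
      (∫ t in (0:ℝ)..T, (1/2 : ℝ) * ‖w' t + gradient ψ (w t)‖ ^ 2) + ψ (w 0) := by
  have hψw := hw.comp_contDiff hψ
  have hg : ContinuousOn (fun t => gradient ψ (w t)) (Icc 0 T) :=
    (hψ.gradient (m := 0) le_rfl).continuous.comp_continuousOn hw.continuousOn
  have hsplit : ∀ t, (1/2 : ℝ) * ‖w' t‖ ^ 2 + (1/2 : ℝ) * ‖gradient ψ (w t)‖ ^ 2 =
      (1/2 : ℝ) * ‖w' t + gradient ψ (w t)‖ ^ 2 - ⟪gradient ψ (w t), w' t⟫_ℝ := fun t => by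
    rw [norm_add_sq_real, real_inner_comm]
    ring
  rw [action, funext hsplit, intervalIntegral.integral_sub, hψw.integral_eq_sub hT]
  · ring
  · exact (continuousOn_const.mul ((hw.2.add hg).norm.pow 2)).intervalIntegrable_of_Icc hT
  · exact hψw.2.intervalIntegrable_of_Icc hT

theorem action_le_of_deriv_eq_neg_gradient (hψ : ContDiff ℝ 1 ψ) (hT : 0 ≤ T)
    (hu : HasContinuousDerivOn u u' (Icc 0 T))
    (hflow : ∀ t ∈ Icc 0 T, u' t = -gradient ψ (u t))
    (hw : HasContinuousDerivOn w w' (Icc 0 T)) (hw0 : w 0 = u 0) :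
    action ψ T u u' ≤ action ψ T w w' := by
  have hu0 : ∫ t in (0:ℝ)..T, (1/2 : ℝ) * ‖u' t + gradient ψ (u t)‖ ^ 2 = 0 := by
    refine (intervalIntegral.integral_congr (g := fun _ => 0) fun t ht => ?_).trans (by simp)
    rw [uIcc_of_le hT] at ht
    simp [hflow t ht]
  rw [action_eq_integral_norm_sq_add hψ hT hu, action_eq_integral_norm_sq_add hψ hT hw, hu0,
    hw0, zero_add]
  exact le_add_of_nonneg_left (intervalIntegral.integral_nonneg hT fun _ _ => by positivity)

theorem hasDerivAt_action_add_smul (hψ : ContDiff ℝ 2 ψ) (hT : 0 ≤ T)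
    (hu : HasContinuousDerivOn u u' (Icc 0 T)) (hφ : HasContinuousDerivOn φ φ' (Icc 0 T)) :
    HasDerivAt (fun x : ℝ => action ψ T (fun t => u t + x • φ t) (fun t => u' t + x • φ' t))
      ((∫ t in (0:ℝ)..T, (⟪u' t, φ' t⟫_ℝ + ⟪gradV ψ (u t), φ t⟫_ℝ)) +
        ⟪gradient ψ (u T), φ T⟫_ℝ) 0 := by
  have hline : ∀ (c d : H) (x : ℝ), HasDerivAt (fun x : ℝ => c + x • d) d x := fun c d x => by
    simpa using ((hasDerivAt_id x).smul_const d).const_add c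
  have hgrad : Continuous (gradient ψ) := (hψ.gradient (m := 1) le_rfl).continuous
  have hint := hasDerivAt_integral_of_continuousOn_prod (a := 0) (b := T) (x₀ := 0)
    (F := fun x t => (1/2 : ℝ) * ‖u' t + x • φ' t‖ ^ 2 +
      (1/2 : ℝ) * ‖gradient ψ (u t + x • φ t)‖ ^ 2)
    (F' := fun x t => ⟪u' t + x • φ' t, φ' t⟫_ℝ + ⟪gradV ψ (u t + x • φ t), φ t⟫_ℝ)
    (Icc_mem_nhds (by norm_num : (-1 : ℝ) < 0) one_pos) isCompact_Icc ?_ ?_ ?_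
  · have hend := ((hψ.differentiable two_ne_zero) _).hasGradientAt.comp_hasDerivAt
      (x := 0) (hline (u T) (φ T) 0)
    simp only [zero_smul, add_zero] at hint hend
    exact hint.add hend
  all_goals rw [uIcc_of_le hT]
  · intro x _
    exact (continuousOn_const.mul ((hu.2.add (hφ.2.const_smul x)).norm.pow 2)).add
      (continuousOn_const.mul ((hgrad.comp_continuousOn
        (hu.continuousOn.add (hφ.continuousOn.const_smul x))).norm.pow 2))
  · have hsnd : ∀ {f : ℝ → H}, ContinuousOn f (Icc 0 T) →
        ContinuousOn (fun p : ℝ × ℝ => f p.2) (Icc (-1) 1 ×ˢ Icc 0 T) :=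
      fun hf => hf.comp continuousOn_snd fun p hp => hp.2
    exact (((hsnd hu.2).add (continuousOn_fst.smul (hsnd hφ.2))).inner (hsnd hφ.2)).add
      (((continuous_gradV hψ).comp_continuousOn ((hsnd hu.continuousOn).add
        (continuousOn_fst.smul (hsnd hφ.continuousOn)))).inner (hsnd hφ.continuousOn))
  · intro t _ x _
    exact (((hline _ _ x).norm_sq.const_mul (1/2 : ℝ)).congr_deriv (by ring)).add
      ((hasGradientAt_gradV hψ _).comp_hasDerivAt (hline _ _ x))

def IsActionMinimizer (ψ : H → ℝ) (T : ℝ) (u u' : ℝ → H) : Prop :=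
  ∀ w w', HasContinuousDerivOn w w' (Icc 0 T) → w 0 = u 0 → action ψ T u u' ≤ action ψ T w w'

namespace IsActionMinimizer

theorem firstVariation_eq_zero (hmin : IsActionMinimizer ψ T u u') (hψ : ContDiff ℝ 2 ψ)
    (hT : 0 ≤ T) (hu : HasContinuousDerivOn u u' (Icc 0 T))
    (hφ : HasContinuousDerivOn φ φ' (Icc 0 T)) (hφ0 : φ 0 = 0) :
    (∫ t in (0:ℝ)..T, (⟪u' t, φ' t⟫_ℝ + ⟪gradV ψ (u t), φ t⟫_ℝ)) +
      ⟪gradient ψ (u T), φ T⟫_ℝ = 0 := by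
  refine IsLocalMin.hasDerivAt_eq_zero (Eventually.of_forall fun x => ?_)
    (hasDerivAt_action_add_smul hψ hT hu hφ)
  simpa using hmin _ _ (hu.add (hφ.const_smul x)) (by simp [hφ0])

theorem eqOn_primitive_gradV (hmin : IsActionMinimizer ψ T u u') (hψ : ContDiff ℝ 2 ψ)
    (hT : 0 < T) (hu : HasContinuousDerivOn u u' (Icc 0 T)) :
    EqOn u' (fun t => (∫ s in (0:ℝ)..t, gradV ψ (u s)) -
      ((∫ s in (0:ℝ)..T, gradV ψ (u s)) + gradient ψ (u T))) (Icc 0 T) := by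
  set G : ℝ → H := fun t => ∫ s in (0:ℝ)..t, gradV ψ (u s)
  have hG : HasContinuousDerivOn G (fun t => gradV ψ (u t)) (Icc 0 T) :=
    hasContinuousDerivOn_primitive ((continuous_gradV hψ).comp_continuousOn hu.continuousOn)
  have hvar : ∀ φ φ', HasContinuousDerivOn φ φ' (Icc 0 T) → φ 0 = 0 →
      (∫ t in (0:ℝ)..T, ⟪u' t - G t, φ' t⟫_ℝ) + ⟪G T + gradient ψ (u T), φ T⟫_ℝ = 0 := by
    intro φ φ' hφ hφ0
    have hibp := (hG.inner hφ).integral_eq_sub hT.le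
    have hFV := hmin.firstVariation_eq_zero hψ hT.le hu hφ hφ0
    rw [hφ0, inner_zero_right, sub_zero] at hibp
    have hsub : ∫ t in (0:ℝ)..T, ⟪u' t - G t, φ' t⟫_ℝ =
        (∫ t in (0:ℝ)..T, (⟪u' t, φ' t⟫_ℝ + ⟪gradV ψ (u t), φ t⟫_ℝ)) -
          ∫ t in (0:ℝ)..T, (⟪gradV ψ (u t), φ t⟫_ℝ + ⟪G t, φ' t⟫_ℝ) := by
      rw [← intervalIntegral.integral_sub]
      · refine intervalIntegral.integral_congr fun t _ => ?_
        simp only [inner_sub_left]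
        ring
      · exact ((hu.2.inner hφ.2).add (hG.2.inner hφ.continuousOn)).intervalIntegrable_of_Icc
          hT.le
      · exact (hG.inner hφ).2.intervalIntegrable_of_Icc hT.le
    rw [hsub, hibp, inner_add_left]
    linarith
  intro t ht
  have h : u' t - G t = -(G T + gradient ψ (u T)) :=
    eqOn_neg_of_integral_inner_add_inner_eq_zero hT (hu.2.sub hG.continuousOn) hvar ht
  show u' t = G t - (G T + gradient ψ (u T))
  rw [sub_eq_add_neg, ← h]
  abel

theorem deriv_eq_neg_gradient (hmin : IsActionMinimizer ψ T u u') (hψ : ContDiff ℝ 2 ψ) (hT : 0 < T)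
    (hu : HasContinuousDerivOn u u' (Icc 0 T)) :
    ∀ t ∈ Icc 0 T, u' t = -gradient ψ (u t) := by
  set G : ℝ → H := fun t => ∫ s in (0:ℝ)..t, gradV ψ (u s)
  set c : H := G T + gradient ψ (u T)
  have hEL : EqOn u' (fun t => G t - c) (Icc 0 T) := hmin.eqOn_primitive_gradV hψ hT hu
  have hG : HasContinuousDerivOn G (fun t => gradV ψ (u t)) (Icc 0 T) :=
    hasContinuousDerivOn_primitive ((continuous_gradV hψ).comp_continuousOn hu.continuousOn)
  have hg : ContDiff ℝ 1 (gradient ψ) := hψ.gradient le_rfl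
  have hP : EqOn (fun t => u' t + gradient ψ (u t)) 0 (Icc 0 T) := by
    refine eqOn_zero_of_hasDerivWithinAt_clm_apply (A := fun t => fderiv ℝ (gradient ψ) (u t))
      ((hg.continuous_fderiv one_ne_zero).comp_continuousOn hu.continuousOn) (fun t ht => ?_) ?_
    · have hderiv := ((hG.1 t ht).sub_const c).add
        ((hg.differentiable one_ne_zero (u t)).hasFDerivAt.comp_hasDerivWithinAt t (hu.1 t ht))
      refine (hderiv.congr (fun s hs => by simp [hEL hs]) (by simp [hEL ht])).congr_deriv ?_
      beta_reduce
      rw [map_add, add_comm]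
      rfl
    · simp [hEL (right_mem_Icc.2 hT.le), c]
  exact fun t ht => eq_neg_of_add_eq_zero_left (hP ht)

end IsActionMinimizer

end Action

theorem stmt_19_general {H : Type*} [NormedAddCommGroup H] [InnerProductSpace ℝ H] [CompleteSpace H]
    (ψ : H → ℝ) (hψ : ContDiff ℝ 2 ψ)
    (T : ℝ) (hT : 0 < T)
    (u u' : ℝ → H)
    (hu : ∀ t ∈ Icc (0:ℝ) T, HasDerivWithinAt u (u' t) (Icc 0 T) t)
    (hu' : ContinuousOn u' (Icc 0 T)) :
    (∀ t ∈ Icc (0:ℝ) T, u' t = -(gradient ψ (u t))) ↔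
      (∀ w w' : ℝ → H, (∀ t ∈ Icc (0:ℝ) T, HasDerivWithinAt w (w' t) (Icc 0 T) t) →
        ContinuousOn w' (Icc 0 T) → w 0 = u 0 →
        (∫ t in (0:ℝ)..T, ((1/2 : ℝ) * ‖u' t‖ ^ 2 + (1/2 : ℝ) * ‖gradient ψ (u t)‖ ^ 2)) +
            ψ (u T) ≤
          (∫ t in (0:ℝ)..T, ((1/2 : ℝ) * ‖w' t‖ ^ 2 + (1/2 : ℝ) * ‖gradient ψ (w t)‖ ^ 2)) +
            ψ (w T)) := by
  have hu₁ : HasContinuousDerivOn u u' (Icc 0 T) := ⟨hu, hu'⟩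
  constructor
  · intro hflow w w' hw hw' hw0
    exact action_le_of_deriv_eq_neg_gradient (hψ.of_le one_le_two) hT.le hu₁ hflow ⟨hw, hw'⟩ hw0
  · intro hmin
    exact IsActionMinimizer.deriv_eq_neg_gradient (fun w w' hw => hmin w w' hw.1 hw.2) hψ hT hu₁

/-- Proposition 9 (variational formulation): assume `V = ½‖∇ψ‖²` is convex and `ψ` is
bounded from below, and let `T > 0`. With
`J(T; w) = ∫₀ᵀ (½‖w'(t)‖² + ½‖∇ψ(w t)‖²) dt + ψ(w T)`, a `C¹` function
`u : [0, T] → H` solves `u' = -∇ψ(u)` on `[0, T]` if and only if `J(T; u) ≤ J(T; w)`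
for every `C¹` function `w : [0, T] → H` with `w 0 = u 0`. -/
theorem stmt_19 {H : Type*} [NormedAddCommGroup H] [InnerProductSpace ℝ H] [CompleteSpace H]
    (ψ : H → ℝ) (hψ : ContDiff ℝ 2 ψ)
    (hVconv : ConvexOn ℝ univ (fun x => (1/2 : ℝ) * ‖gradient ψ x‖ ^ 2))
    (hbdd : BddBelow (range ψ))
    (T : ℝ) (hT : 0 < T)
    (u u' : ℝ → H)
    (hu : ∀ t ∈ Icc (0:ℝ) T, HasDerivWithinAt u (u' t) (Icc 0 T) t)
    (hu' : ContinuousOn u' (Icc 0 T)) :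
    (∀ t ∈ Icc (0:ℝ) T, u' t = -(gradient ψ (u t))) ↔
      (∀ w w' : ℝ → H, (∀ t ∈ Icc (0:ℝ) T, HasDerivWithinAt w (w' t) (Icc 0 T) t) →
        ContinuousOn w' (Icc 0 T) → w 0 = u 0 →
        (∫ t in (0:ℝ)..T, ((1/2 : ℝ) * ‖u' t‖ ^ 2 + (1/2 : ℝ) * ‖gradient ψ (u t)‖ ^ 2)) +
            ψ (u T) ≤
          (∫ t in (0:ℝ)..T, ((1/2 : ℝ) * ‖w' t‖ ^ 2 + (1/2 : ℝ) * ‖gradient ψ (w t)‖ ^ 2)) +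
            ψ (w T)) :=
  stmt_19_general ψ hψ T hT u u' hu hu'
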